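/- arXiv:1712.00579 — 6 statements merged into one kernel-verified Lean document; each statement's English description precedes it below -/
import Mathlib

section
/- Let P be an irreducible row-stochastic S×S real matrix (S ≥ 2) with stationary distribution μ and mean first passage times T_{ij}. Let P̃ be any row-stochastic S×S matrix and set E = P̃ − P. If ‖E‖_∞ < 2 / (S · max_{i≠j} T_{ij}), then P̃ is also irreducible, and its (unique) stationary distribution μ̃ satisfies, for every state j, |μ̃_j − μ_j| ≤ μ_j · (S‖E‖_∞ / 2) · max_{i≠j} T_{ij}. -/
/-!
Fix a target state `j` and let `v` be the `j`-th column of `T` with its diagonal entry set to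
zero, so that the defining equations of the mean first passage times read `T i j = 1 + (P v) i`.
For any stationary distribution `ν` of another stochastic matrix `Q`, pairing these equations
with `ν` and using `ν Q = ν` gives `1 - ν j * T j j = ν (Q - P) v`. Taking `Q = P` yields Kac's
formula `μ j * T j j = 1`, and then `ν j - μ j = -μ j * ν (Q - P) v`. Since the rows of `Q - P`
sum to zero and `0 ≤ v ≤ max_{i≠j} T i j`, centring `v` bounds each entry of `(Q - P) v` by
`S ‖Q - P‖_∞ max_{i≠j} T i j / 2`, which is below `1` under the smallness assumption.

That bound also gives irreducibility of `Q`: off `j` we get `(Q v) i < v i`, so if some state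
could not reach `j`, a minimiser of `v` over the (closed) set of such states would contradict
this strict inequality.
-/

/-- A row-stochastic matrix: nonnegative entries, each row sums to 1. -/
def RowStochastic {S : ℕ} (P : Matrix (Fin S) (Fin S) ℝ) : Prop :=
  (∀ i j, 0 ≤ P i j) ∧ ∀ i, ∑ j, P i j = 1

/-- Irreducibility of a Markov transition matrix: every state reaches every state. -/
def MCIrreducible {S : ℕ} (P : Matrix (Fin S) (Fin S) ℝ) : Prop :=
  ∀ i j, ∃ n : ℕ, 1 ≤ n ∧ 0 < (P ^ n) i j

/-- `μ` is a stationary distribution of `P`. -/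
def IsStationaryDist {S : ℕ} (P : Matrix (Fin S) (Fin S) ℝ) (μ : Fin S → ℝ) : Prop :=
  (∀ j, 0 ≤ μ j) ∧ (∑ j, μ j = 1) ∧ ∀ j, ∑ i, μ i * P i j = μ j

/-- `T` is the matrix of mean first passage times of `P`: the unique positive
solution of `T i j = 1 + ∑_{k ≠ j} P i k * T k j`. -/
def IsMFPT {S : ℕ} (P T : Matrix (Fin S) (Fin S) ℝ) : Prop :=
  (∀ i j, 0 < T i j) ∧
    ∀ i j, T i j = 1 + ∑ k ∈ Finset.univ.filter (fun k => k ≠ j), P i k * T k j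

/-- The entrywise max-norm ‖E‖_∞ of a matrix. -/
noncomputable def matNormInf {S : ℕ} (E : Matrix (Fin S) (Fin S) ℝ) : ℝ :=
  ⨆ i, ⨆ j, |E i j|

open Matrix

section Reachability

variable {ι : Type*} [Fintype ι] [DecidableEq ι]

def Reaches (P : Matrix ι ι ℝ) (i j : ι) : Prop :=
  ∃ n, 1 ≤ n ∧ 0 < (P ^ n) i j

theorem reaches_of_pos {P : Matrix ι ι ℝ} {i j : ι} (h : 0 < P i j) : Reaches P i j :=
  ⟨1, le_rfl, by rwa [pow_one]⟩

theorem Reaches.trans {P : Matrix ι ι ℝ} (hP : ∀ i j, 0 ≤ P i j) {a b c : ι}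
    (hab : Reaches P a b) (hbc : Reaches P b c) : Reaches P a c := by
  obtain ⟨n, hn, hn_pos⟩ := hab
  obtain ⟨m, hm, hm_pos⟩ := hbc
  refine ⟨n + m, by omega, ?_⟩
  rw [pow_add, mul_apply]
  exact (mul_pos hn_pos hm_pos).trans_le <| Finset.single_le_sum
    (fun k _ => mul_nonneg (pow_apply_nonneg hP n a k) (pow_apply_nonneg hP m k c))
    (Finset.mem_univ b)

theorem reaches_of_mulVec_lt {P : Matrix ι ι ℝ} (hP₀ : ∀ i k, 0 ≤ P i k)
    (hP₁ : ∀ i, ∑ k, P i k = 1) {v : ι → ℝ} {j : ι} (hv : ∀ i, i ≠ j → (P *ᵥ v) i < v i)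
    {i : ι} (hij : i ≠ j) : Reaches P i j := by
  classical
  by_contra hi
  set B := Finset.univ.filter fun a => a ≠ j ∧ ¬Reaches P a j
  obtain ⟨a, haB, ha_min⟩ := B.exists_min_image v ⟨i, by simp [B, hij, hi]⟩
  obtain ⟨haj, ha⟩ := (Finset.mem_filter.mp haB).2
  have hB_closed : ∀ k, 0 < P a k → k ∈ B := by
    intro k hk
    simp only [B, Finset.mem_filter, Finset.mem_univ, true_and]
    refine ⟨?_, fun hkj => ha ((reaches_of_pos hk).trans hP₀ hkj)⟩
    rintro rfl
    exact ha (reaches_of_pos hk)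
  have hmin : v a ≤ (P *ᵥ v) a := calc
    v a = ∑ k, P a k * v a := by rw [← Finset.sum_mul, hP₁, one_mul]
    _ ≤ ∑ k, P a k * v k := Finset.sum_le_sum fun k _ => by
        rcases (hP₀ a k).eq_or_lt with hk | hk
        · simp [← hk]
        · exact mul_le_mul_of_nonneg_left (ha_min k (hB_closed k hk)) hk.le
    _ = (P *ᵥ v) a := rfl
  exact (hv a haj).not_ge hmin

end Reachability

theorem abs_dotProduct_le_of_sum_eq_one {ι : Type*} [Fintype ι] {μ w : ι → ℝ}
    (hμ₀ : ∀ i, 0 ≤ μ i) (hμ₁ : ∑ i, μ i = 1) {c : ℝ} (hw : ∀ i, |w i| ≤ c) :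
    |μ ⬝ᵥ w| ≤ c := calc
  |μ ⬝ᵥ w| ≤ ∑ i, |μ i * w i| := Finset.abs_sum_le_sum_abs _ _
  _ ≤ ∑ i, μ i * c := Finset.sum_le_sum fun i _ => by
      rw [abs_mul, abs_of_nonneg (hμ₀ i)]
      exact mul_le_mul_of_nonneg_left (hw i) (hμ₀ i)
  _ = c := by rw [← Finset.sum_mul, hμ₁, one_mul]

section

variable {S : ℕ}

theorem abs_le_matNormInf (E : Matrix (Fin S) (Fin S) ℝ) (i j : Fin S) :
    |E i j| ≤ matNormInf E :=
  (le_ciSup (f := fun k => |E i k|) (Set.finite_range _).bddAbove j).trans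
    (le_ciSup (f := fun i => ⨆ k, |E i k|) (Set.finite_range _).bddAbove i)

theorem matNormInf_nonneg (E : Matrix (Fin S) (Fin S) ℝ) : 0 ≤ matNormInf E :=
  Real.iSup_nonneg fun _ => Real.iSup_nonneg fun _ => abs_nonneg _

theorem abs_mulVec_apply_le_of_sum_eq_zero {E : Matrix (Fin S) (Fin S) ℝ}
    (hE : ∀ i, ∑ k, E i k = 0) {v : Fin S → ℝ} {c : ℝ} (hv₀ : ∀ k, 0 ≤ v k)
    (hv : ∀ k, v k ≤ c) (i : Fin S) :
    |(E *ᵥ v) i| ≤ S * matNormInf E * c / 2 := by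
  have hcentre : (E *ᵥ v) i = ∑ k, E i k * (v k - c / 2) := by
    simp only [mul_sub, Finset.sum_sub_distrib, ← Finset.sum_mul, hE, zero_mul, sub_zero]
    rfl
  calc |(E *ᵥ v) i| ≤ ∑ k, |E i k * (v k - c / 2)| :=
        hcentre ▸ Finset.abs_sum_le_sum_abs _ _
    _ ≤ ∑ _k : Fin S, matNormInf E * (c / 2) := Finset.sum_le_sum fun k _ => by
        rw [abs_mul]
        exact mul_le_mul (abs_le_matNormInf E i k)
          (abs_le.2 ⟨by linarith [hv₀ k], by linarith [hv k]⟩) (abs_nonneg _)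
          (matNormInf_nonneg E)
    _ = S * matNormInf E * c / 2 := by
        rw [Finset.sum_const, Finset.card_univ, Fintype.card_fin, nsmul_eq_mul]
        ring

theorem RowStochastic.sum_sub_eq_zero {P Q : Matrix (Fin S) (Fin S) ℝ}
    (hP : RowStochastic P) (hQ : RowStochastic Q) (i : Fin S) : ∑ k, (Q - P) i k = 0 := by
  simp only [Matrix.sub_apply, Finset.sum_sub_distrib, hP.2 i, hQ.2 i, sub_self]

theorem IsStationaryDist.vecMul_eq {P : Matrix (Fin S) (Fin S) ℝ} {μ : Fin S → ℝ}
    (hμ : IsStationaryDist P μ) : μ ᵥ* P = μ :=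
  funext hμ.2.2

theorem mcIrreducible_of_reaches_of_ne [Nontrivial (Fin S)] {P : Matrix (Fin S) (Fin S) ℝ}
    (hP : ∀ i j, 0 ≤ P i j) (h : ∀ i j, i ≠ j → Reaches P i j) : MCIrreducible P := by
  intro i j
  rcases eq_or_ne i j with rfl | hij
  · obtain ⟨k, hk⟩ := exists_ne i
    exact (h i k hk.symm).trans hP (h k i hk)
  · exact h i j hij

def offDiagCol (T : Matrix (Fin S) (Fin S) ℝ) (j : Fin S) : Fin S → ℝ :=
  fun k => if k = j then 0 else T k j

theorem offDiagCol_nonneg {T : Matrix (Fin S) (Fin S) ℝ} {j : Fin S} (hT : ∀ k, 0 ≤ T k j)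
    (k : Fin S) : 0 ≤ offDiagCol T j k := by
  by_cases hk : k = j <;> simp [offDiagCol, hk, hT k]

theorem offDiagCol_le {T : Matrix (Fin S) (Fin S) ℝ} {j : Fin S} {c : ℝ} (hc : 0 ≤ c)
    (hT : ∀ k, k ≠ j → T k j ≤ c) (k : Fin S) : offDiagCol T j k ≤ c := by
  by_cases hk : k = j
  · simpa [offDiagCol, hk] using hc
  · simpa [offDiagCol, hk] using hT k hk

namespace IsMFPT

variable {P Q T : Matrix (Fin S) (Fin S) ℝ}

theorem one_add_mulVec_offDiagCol (hT : IsMFPT P T) (i j : Fin S) :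
    1 + (P *ᵥ offDiagCol T j) i = T i j := by
  rw [hT.2 i j, Finset.sum_filter]
  congr 1
  show ∑ k, P i k * offDiagCol T j k = _
  refine Finset.sum_congr rfl fun k _ => ?_
  by_cases hk : k = j <;> simp [offDiagCol, hk]

theorem one_sub_mul_diag_eq (hT : IsMFPT P T) {ν : Fin S → ℝ} (hν : IsStationaryDist Q ν)
    (j : Fin S) : 1 - ν j * T j j = ν ⬝ᵥ ((Q - P) *ᵥ offDiagCol T j) := by
  have hv : offDiagCol T j - P *ᵥ offDiagCol T j = 1 - Pi.single j (T j j) := by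
    ext i
    have := hT.one_add_mulVec_offDiagCol i j
    by_cases hi : i = j
    · subst hi
      simp only [offDiagCol, Pi.sub_apply, ↓reduceIte, Pi.one_apply, Pi.single_eq_same]
      linarith
    · simp only [offDiagCol, Pi.sub_apply, if_neg hi, Pi.one_apply, Pi.single_eq_of_ne hi]
      linarith
  rw [sub_mulVec, dotProduct_sub, dotProduct_mulVec, hν.vecMul_eq, ← dotProduct_sub, hv,
    dotProduct_sub, dotProduct_one, dotProduct_single, hν.2.1]

theorem mul_diag_eq_one (hT : IsMFPT P T) {μ : Fin S → ℝ} (hμ : IsStationaryDist P μ)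
    (j : Fin S) : μ j * T j j = 1 := by
  have := hT.one_sub_mul_diag_eq hμ j
  rw [sub_self, zero_mulVec, dotProduct_zero] at this
  linarith

theorem sub_eq_neg_mul (hT : IsMFPT P T) {μ ν : Fin S → ℝ} (hμ : IsStationaryDist P μ)
    (hν : IsStationaryDist Q ν) (j : Fin S) :
    ν j - μ j = -(μ j * (ν ⬝ᵥ ((Q - P) *ᵥ offDiagCol T j))) := by
  rw [← hT.one_sub_mul_diag_eq hν j]
  linear_combination (-ν j) * hT.mul_diag_eq_one hμ j

theorem mulVec_offDiagCol_lt (hT : IsMFPT P T) {i j : Fin S}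
    (hsmall : ((Q - P) *ᵥ offDiagCol T j) i < 1) (hij : i ≠ j) :
    (Q *ᵥ offDiagCol T j) i < offDiagCol T j i := by
  have := hT.one_add_mulVec_offDiagCol i j
  rw [sub_mulVec, Pi.sub_apply] at hsmall
  simp only [offDiagCol, if_neg hij]
  linarith

theorem mcIrreducible_of_perturbation [Nontrivial (Fin S)] (hT : IsMFPT P T)
    (hQ : RowStochastic Q) (hsmall : ∀ i j, ((Q - P) *ᵥ offDiagCol T j) i < 1) :
    MCIrreducible Q :=
  mcIrreducible_of_reaches_of_ne hQ.1 fun _ _ hij =>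
    reaches_of_mulVec_lt hQ.1 hQ.2 (fun _ hi => hT.mulVec_offDiagCol_lt (hsmall _ _) hi) hij

end IsMFPT

end

theorem stationary_distribution_perturbation_general
    {S : ℕ}
    (P Pt : Matrix (Fin S) (Fin S) ℝ)
    (hP : RowStochastic P) (hPt : RowStochastic Pt)
    (μ : Fin S → ℝ) (hμ : IsStationaryDist P μ)
    (T : Matrix (Fin S) (Fin S) ℝ) (hT : IsMFPT P T)
    (Tmax : ℝ) (hTmax : IsGreatest {x : ℝ | ∃ i j : Fin S, i ≠ j ∧ x = T i j} Tmax)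
    (hE : matNormInf (Pt - P) < 2 / (S * Tmax)) :
    MCIrreducible Pt ∧
      ∀ μt : Fin S → ℝ, IsStationaryDist Pt μt →
        ∀ j, |μt j - μ j| ≤ μ j * (S * matNormInf (Pt - P) / 2) * Tmax := by
  obtain ⟨i₀, j₀, hij₀, -⟩ := hTmax.1
  have : Nontrivial (Fin S) := ⟨⟨i₀, j₀, hij₀⟩⟩
  have hS : (0 : ℝ) < S := Nat.cast_pos.2 i₀.pos
  have hTmax_pos : 0 < Tmax := (hT.1 i₀ j₀).trans_le (hTmax.2 ⟨i₀, j₀, hij₀, rfl⟩)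
  have hbound : ∀ i j, |((Pt - P) *ᵥ offDiagCol T j) i| ≤ S * matNormInf (Pt - P) * Tmax / 2 :=
    fun i j => abs_mulVec_apply_le_of_sum_eq_zero (hP.sum_sub_eq_zero hPt)
      (offDiagCol_nonneg fun k => (hT.1 k j).le)
      (offDiagCol_le hTmax_pos.le fun k hk => hTmax.2 ⟨k, j, hk, rfl⟩) i
  have hsmall : S * matNormInf (Pt - P) * Tmax / 2 < 1 := by
    rw [lt_div_iff₀ (by positivity)] at hE
    linarith
  refine ⟨hT.mcIrreducible_of_perturbation hPt fun i j =>
    (le_abs_self _).trans_lt ((hbound i j).trans_lt hsmall), fun μt hμt j => ?_⟩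
  rw [hT.sub_eq_neg_mul hμ hμt j, abs_neg, abs_mul, abs_of_nonneg (hμ.1 j)]
  calc μ j * |μt ⬝ᵥ ((Pt - P) *ᵥ offDiagCol T j)|
      ≤ μ j * (S * matNormInf (Pt - P) * Tmax / 2) := mul_le_mul_of_nonneg_left
        (abs_dotProduct_le_of_sum_eq_one hμt.1 hμt.2.1 fun i => hbound i j) (hμ.1 j)
    _ = μ j * (S * matNormInf (Pt - P) / 2) * Tmax := by ring

/-- Perturbation bound for stationary distributions: if `‖P̃ − P‖_∞ < 2/(S·max_{i≠j} T_{ij})`,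
then `P̃` is irreducible and its stationary distribution `μ̃` satisfies
`|μ̃_j − μ_j| ≤ μ_j (S‖E‖_∞/2) max_{i≠j} T_{ij}` for every `j`. -/
theorem stationary_distribution_perturbation
    {S : ℕ} (hS : 2 ≤ S)
    (P Pt : Matrix (Fin S) (Fin S) ℝ)
    (hP : RowStochastic P) (hPt : RowStochastic Pt)
    (hirr : MCIrreducible P)
    (μ : Fin S → ℝ) (hμ : IsStationaryDist P μ)
    (T : Matrix (Fin S) (Fin S) ℝ) (hT : IsMFPT P T)
    (Tmax : ℝ) (hTmax : IsGreatest {x : ℝ | ∃ i j : Fin S, i ≠ j ∧ x = T i j} Tmax)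
    (hE : matNormInf (Pt - P) < 2 / (S * Tmax)) :
    MCIrreducible Pt ∧
      ∀ μt : Fin S → ℝ, IsStationaryDist Pt μt →
        ∀ j, |μt j - μ j| ≤ μ j * (S * matNormInf (Pt - P) / 2) * Tmax :=
  stationary_distribution_perturbation_general P Pt hP hPt μ hμ T hT Tmax hTmax hE
end

section
/- Let P and P̃ be row-stochastic S×S real matrices, with P irreducible, and let T_{ij} and T̃_{ij} denote their mean first passage times. If T_{ij} ≤ D for all i, j and ‖P̃ − P‖_∞ ≤ 1 / (8 D S²), then P̃ is irreducible and its mean first passage times satisfy T̃_{ij} ≤ 2D for all i, j. -/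
open Finset Matrix

lemma myMulVec_mono {S : ℕ} {Q : Matrix (Fin S) (Fin S) ℝ}
    (hQ : ∀ i j, 0 ≤ Q i j) {a b : Fin S → ℝ} (hab : ∀ k, a k ≤ b k) :
    ∀ k, (Q *ᵥ a) k ≤ (Q *ᵥ b) k := by
  intro k
  simp only [Matrix.mulVec, dotProduct]
  exact Finset.sum_le_sum fun l _ => mul_le_mul_of_nonneg_left (hab l) (hQ k l)

lemma myPow_nonneg {S : ℕ} {Q : Matrix (Fin S) (Fin S) ℝ}
    (hQ : ∀ i j, 0 ≤ Q i j) : ∀ n i j, 0 ≤ (Q ^ n) i j := by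
  intro n
  induction n with
  | zero =>
    intro i j
    rw [pow_zero, Matrix.one_apply]
    split <;> norm_num
  | succ n ih =>
    intro i j
    rw [pow_succ, Matrix.mul_apply]
    exact Finset.sum_nonneg fun l _ => mul_nonneg (ih i l) (hQ l j)

lemma myPow_contract {S : ℕ} {Q : Matrix (Fin S) (Fin S) ℝ}
    (hQ : ∀ i j, 0 ≤ Q i j) {s : Fin S → ℝ} {θ : ℝ} (hθ : 0 ≤ θ)
    (h : ∀ k, (Q *ᵥ s) k ≤ θ * s k) :
    ∀ n k, ((Q ^ n) *ᵥ s) k ≤ θ ^ n * s k := by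
  intro n
  induction n with
  | zero => intro k; simp [Matrix.one_mulVec]
  | succ n ih =>
    intro k
    have h1 : ((Q ^ (n + 1)) *ᵥ s) k = ((Q ^ n) *ᵥ (Q *ᵥ s)) k := by
      rw [pow_succ, ← Matrix.mulVec_mulVec]
    rw [h1]
    have h2 : ((Q ^ n) *ᵥ (Q *ᵥ s)) k ≤ ((Q ^ n) *ᵥ (θ • s)) k :=
      myMulVec_mono (myPow_nonneg hQ n) (fun l => by simpa using h l) k
    have h3 : ((Q ^ n) *ᵥ (θ • s)) k = θ * (((Q ^ n) *ᵥ s) k) := by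
      rw [Matrix.mulVec_smul]; rfl
    have h4 : θ * (((Q ^ n) *ᵥ s) k) ≤ θ * (θ ^ n * s k) :=
      mul_le_mul_of_nonneg_left (ih k) hθ
    calc ((Q ^ n) *ᵥ (Q *ᵥ s)) k ≤ θ * (((Q ^ n) *ᵥ s) k) := h3 ▸ h2
      _ ≤ θ * (θ ^ n * s k) := h4
      _ = θ ^ (n + 1) * s k := by ring

lemma myLe_pow_mulVec {S : ℕ} {Q : Matrix (Fin S) (Fin S) ℝ}
    (hQ : ∀ i j, 0 ≤ Q i j) {d : Fin S → ℝ}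
    (h : ∀ k, d k ≤ (Q *ᵥ d) k) :
    ∀ n k, d k ≤ ((Q ^ n) *ᵥ d) k := by
  intro n
  induction n with
  | zero => intro k; simp [Matrix.one_mulVec]
  | succ n ih =>
    intro k
    have h1 : ((Q ^ (n + 1)) *ᵥ d) k = ((Q ^ n) *ᵥ (Q *ᵥ d)) k := by
      rw [pow_succ, ← Matrix.mulVec_mulVec]
    rw [h1]
    exact (ih k).trans (myMulVec_mono (myPow_nonneg hQ n) h k)

lemma myClosed_rowsum {S : ℕ} {Q : Matrix (Fin S) (Fin S) ℝ}
    (hQ : ∀ i j, 0 ≤ Q i j) {A : Finset (Fin S)}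
    (hA : ∀ k ∈ A, ∑ l ∈ A, Q k l = 1) :
    ∀ n, ∀ k ∈ A, 1 ≤ ∑ l ∈ A, (Q ^ n) k l := by
  intro n
  induction n with
  | zero =>
    intro k hk
    rw [pow_zero]
    rw [Finset.sum_eq_single k (fun l _ hl => Matrix.one_apply_ne' hl) (fun h => absurd hk h)]
    simp
  | succ n ih =>
    intro k hk
    have expand : ∑ l ∈ A, (Q ^ (n + 1)) k l = ∑ m, Q k m * ∑ l ∈ A, (Q ^ n) m l := by
      rw [pow_succ']
      simp only [Matrix.mul_apply]
      rw [Finset.sum_comm]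
      simp [Finset.mul_sum]
    rw [expand]
    calc (1 : ℝ) = ∑ m ∈ A, Q k m * 1 := by
          simp [hA k hk]
      _ ≤ ∑ m ∈ A, Q k m * ∑ l ∈ A, (Q ^ n) m l := by
          exact Finset.sum_le_sum fun m hm =>
            mul_le_mul_of_nonneg_left (ih m hm) (hQ k m)
      _ ≤ ∑ m, Q k m * ∑ l ∈ A, (Q ^ n) m l := by
          apply Finset.sum_le_sum_of_subset_of_nonneg (Finset.subset_univ A)
          intro m _ _
          exact mul_nonneg (hQ k m) (Finset.sum_nonneg fun l _ => myPow_nonneg hQ n m l)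

/-- The taboo matrix: column `j` of `Pt` zeroed out. -/
def tabooM {S : ℕ} (Pt : Matrix (Fin S) (Fin S) ℝ) (j : Fin S) :
    Matrix (Fin S) (Fin S) ℝ :=
  Matrix.of fun k l => if l = j then 0 else Pt k l

/-- Perturbation bound for mean first passage times: if all mean first passage times of
the irreducible `P` are at most `D` and `‖P̃ − P‖_∞ ≤ 1/(8DS²)`, then `P̃` is irreducible
and all its mean first passage times are at most `2D`. -/
theorem mfpt_perturbation
    {S : ℕ}
    (P Pt : Matrix (Fin S) (Fin S) ℝ)
    (hP : RowStochastic P) (hPt : RowStochastic Pt)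
    (hirr : MCIrreducible P)
    (T : Matrix (Fin S) (Fin S) ℝ) (hT : IsMFPT P T)
    (D : ℝ) (hD : 1 ≤ D)
    (hTD : ∀ i j, T i j ≤ D)
    (hE : matNormInf (Pt - P) ≤ 1 / (8 * D * S ^ 2)) :
    MCIrreducible Pt ∧
      ∀ Tt : Matrix (Fin S) (Fin S) ℝ, IsMFPT Pt Tt → ∀ i j, Tt i j ≤ 2 * D := by
  rcases Nat.eq_zero_or_pos S with h0 | hS
  · subst h0
    exact ⟨fun i => i.elim0, fun Tt _ i => i.elim0⟩
  have hSR : (1 : ℝ) ≤ (S : ℝ) := by exact_mod_cast hS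
  have hD0 : (0 : ℝ) < D := lt_of_lt_of_le one_pos hD
  have hε0 : (0 : ℝ) < 1 / (8 * D * (S : ℝ) ^ 2) := by positivity
  -- entrywise bound on the perturbation
  have hEent : ∀ k l, |Pt k l - P k l| ≤ 1 / (8 * D * (S : ℝ) ^ 2) := by
    intro k l
    have h1 : |(Pt - P) k l| ≤ ⨆ m, |(Pt - P) k m| :=
      le_ciSup (f := fun m => |(Pt - P) k m|) (Set.Finite.bddAbove (Set.finite_range _)) l
    have h2 : (⨆ m, |(Pt - P) k m|) ≤ matNormInf (Pt - P) :=
      le_ciSup (f := fun i => ⨆ m, |(Pt - P) i m|) (Set.Finite.bddAbove (Set.finite_range _)) k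
    have := (h1.trans h2).trans hE
    simpa [Matrix.sub_apply] using this
  have hT1 : ∀ k j, 1 ≤ T k j := by
    intro k j
    have heq := hT.2 k j
    have hs : 0 ≤ ∑ l ∈ Finset.univ.filter (fun l => l ≠ j), P k l * T l j :=
      Finset.sum_nonneg fun l _ => mul_nonneg (hP.1 k l) (hT.1 l j).le
    linarith
  have hQ0 : ∀ (j : Fin S) k l, 0 ≤ tabooM Pt j k l := by
    intro j k l
    simp only [tabooM, Matrix.of_apply]
    split
    · exact le_rfl
    · exact hPt.1 k l
  -- the key contraction estimate
  have hQs : ∀ (j : Fin S) k, (tabooM Pt j *ᵥ fun m => 2 * T m j) k ≤ 2 * T k j - 1 := by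
    intro j k
    have sum_eq : (tabooM Pt j *ᵥ fun m => 2 * T m j) k
        = 2 * ∑ l ∈ Finset.univ.filter (fun l => l ≠ j), Pt k l * T l j := by
      simp only [Matrix.mulVec, dotProduct, tabooM, Matrix.of_apply,
        Finset.mul_sum, Finset.sum_filter]
      apply Finset.sum_congr rfl
      intro l _
      by_cases hl : l = j <;> simp [hl] <;> ring
    have step : ∀ l, Pt k l * T l j ≤ P k l * T l j + (1 / (8 * D * (S : ℝ) ^ 2)) * D := by
      intro l
      have h1 := abs_le.mp (hEent k l)
      have h2 := (hT.1 l j).le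
      have h3 := hTD l j
      nlinarith [mul_le_mul_of_nonneg_right h1.2 h2,
        mul_le_mul_of_nonneg_left h3 hε0.le]
    have hcard : ((Finset.univ.filter (fun l => l ≠ j)).card : ℝ) ≤ (S : ℝ) := by
      have : (Finset.univ.filter (fun l => l ≠ j)).card ≤ S :=
        (Finset.card_filter_le _ _).trans_eq (by simp)
      exact_mod_cast this
    have hSe : (S : ℝ) * ((1 / (8 * D * (S : ℝ) ^ 2)) * D) ≤ 1 / 8 := by
      have hSne : (S : ℝ) ≠ 0 := by positivity
      have hDne : D ≠ 0 := ne_of_gt hD0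
      have heq : (S : ℝ) * ((1 / (8 * D * (S : ℝ) ^ 2)) * D) = 1 / (8 * (S : ℝ)) := by
        field_simp
      rw [heq]
      rw [div_le_div_iff₀ (by positivity) (by norm_num)]
      linarith
    have hmain : ∑ l ∈ Finset.univ.filter (fun l => l ≠ j), Pt k l * T l j
        ≤ T k j - 1 + 1 / 8 := by
      have h1 : ∑ l ∈ Finset.univ.filter (fun l => l ≠ j), Pt k l * T l j
          ≤ ∑ l ∈ Finset.univ.filter (fun l => l ≠ j),
              (P k l * T l j + (1 / (8 * D * (S : ℝ) ^ 2)) * D) :=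
        Finset.sum_le_sum fun l _ => step l
      rw [Finset.sum_add_distrib, Finset.sum_const, nsmul_eq_mul] at h1
      have heD : 0 ≤ (1 / (8 * D * (S : ℝ) ^ 2)) * D := by positivity
      have heq := hT.2 k j
      nlinarith [mul_le_mul_of_nonneg_right hcard heD]
    rw [sum_eq]
    linarith
  -- the contraction factor
  have hθhalf : 1 / (2 * D) ≤ 1 / 2 := by
    rw [div_le_div_iff₀ (by linarith) (by norm_num)]
    linarith
  have hθpos : 0 < 1 / (2 * D) := by positivity
  have hθ0 : (0 : ℝ) ≤ 1 - 1 / (2 * D) := by linarith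
  have hθ1 : 1 - 1 / (2 * D) < 1 := by linarith
  have hQθ : ∀ (j : Fin S) k,
      (tabooM Pt j *ᵥ fun m => 2 * T m j) k ≤ (1 - 1 / (2 * D)) * (2 * T k j) := by
    intro j k
    have h1 := hQs j k
    have h2 : T k j / D ≤ 1 := (div_le_one hD0).mpr (hTD k j)
    have h3 : (1 - 1 / (2 * D)) * (2 * T k j) = 2 * T k j - T k j / D := by
      field_simp
    rw [h3]
    have h4 : T k j / D ≤ 1 := h2
    linarith
  have hpow : ∀ (j : Fin S) n k,
      ((tabooM Pt j ^ n) *ᵥ fun m => 2 * T m j) k ≤ (1 - 1 / (2 * D)) ^ n * (2 * T k j) :=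
    fun j => myPow_contract (hQ0 j) hθ0 (hQθ j)
  -- Part 1: irreducibility of Pt
  classical
  have hirrPt : MCIrreducible Pt := by
    intro i j
    by_contra hcon
    push_neg at hcon
    have hcon' : ∀ n, 1 ≤ n → (Pt ^ n) i j ≤ 0 := hcon
    have hPtpow := myPow_nonneg hPt.1
    set A : Finset (Fin S) :=
      Finset.univ.filter (fun k => ∃ n, 1 ≤ n ∧ 0 < (Pt ^ n) i k) with hA
    have hjA : j ∉ A := by
      simp only [hA, Finset.mem_filter]
      rintro ⟨-, n, hn1, hn2⟩
      exact absurd hn2 (not_lt.mpr (hcon' n hn1))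
    have hclosed : ∀ k ∈ A, ∀ l, 0 < Pt k l → l ∈ A := by
      intro k hk l hl
      simp only [hA, Finset.mem_filter] at hk ⊢
      obtain ⟨-, n, hn1, hn2⟩ := hk
      refine ⟨Finset.mem_univ _, n + 1, by omega, ?_⟩
      have hle : (Pt ^ n) i k * Pt k l ≤ (Pt ^ (n + 1)) i l := by
        rw [pow_succ, Matrix.mul_apply]
        exact Finset.single_le_sum
          (fun m _ => mul_nonneg (hPtpow n i m) (hPt.1 m l)) (Finset.mem_univ k)
      exact lt_of_lt_of_le (mul_pos hn2 hl) hle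
    have hArow : ∀ k ∈ A, ∑ l ∈ A, tabooM Pt j k l = 1 := by
      intro k hk
      have h1 : ∀ l ∈ A, tabooM Pt j k l = Pt k l := by
        intro l hl
        have hlj : l ≠ j := fun h => hjA (h ▸ hl)
        simp [tabooM, hlj]
      rw [Finset.sum_congr rfl h1]
      have h2 : ∑ l ∈ A, Pt k l = ∑ l, Pt k l := by
        apply Finset.sum_subset (Finset.subset_univ A)
        intro l _ hl
        by_contra hne
        exact hl (hclosed k hk l (lt_of_le_of_ne (hPt.1 k l) (Ne.symm hne)))
      rw [h2, hPt.2 k]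
    have hAsum := myClosed_rowsum (hQ0 j) hArow
    obtain ⟨m, hm⟩ : ∃ m, 0 < Pt i m := by
      by_contra hc
      push_neg at hc
      have hsum : ∑ l, Pt i l ≤ 0 := Finset.sum_nonpos fun l _ => hc l
      rw [hPt.2 i] at hsum
      linarith
    have hmA : m ∈ A := by
      simp only [hA, Finset.mem_filter]
      exact ⟨Finset.mem_univ _, 1, le_refl 1, by simpa [pow_one] using hm⟩
    obtain ⟨n, hn⟩ := exists_pow_lt_of_lt_one (show (0:ℝ) < 1 / D by positivity) hθ1
    have hA1 := hAsum n m hmA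
    have c1 : (2 : ℝ) ≤ ∑ l ∈ A, (tabooM Pt j ^ n) m l * (2 * T l j) := by
      have h : ∑ l ∈ A, (tabooM Pt j ^ n) m l * 2
          ≤ ∑ l ∈ A, (tabooM Pt j ^ n) m l * (2 * T l j) :=
        Finset.sum_le_sum fun l _ =>
          mul_le_mul_of_nonneg_left (by linarith [hT1 l j]) (myPow_nonneg (hQ0 j) n m l)
      rw [← Finset.sum_mul] at h
      linarith
    have c2 : ∑ l ∈ A, (tabooM Pt j ^ n) m l * (2 * T l j)
        ≤ ((tabooM Pt j ^ n) *ᵥ fun m' => 2 * T m' j) m := by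
      simp only [Matrix.mulVec, dotProduct]
      apply Finset.sum_le_sum_of_subset_of_nonneg (Finset.subset_univ A)
      intro l _ _
      exact mul_nonneg (myPow_nonneg (hQ0 j) n m l) (by linarith [hT1 l j])
    have c3 := hpow j n m
    have c4 : (1 - 1 / (2 * D)) ^ n * (2 * T m j) ≤ (1 - 1 / (2 * D)) ^ n * (2 * D) :=
      mul_le_mul_of_nonneg_left (by linarith [hTD m j]) (pow_nonneg hθ0 n)
    have c5 : (1 - 1 / (2 * D)) ^ n * (2 * D) < (1 / D) * (2 * D) :=
      mul_lt_mul_of_pos_right hn (by linarith)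
    have c6 : (1 / D) * (2 * D) = 2 := by field_simp
    linarith
  refine ⟨hirrPt, ?_⟩
  -- Part 2: bound on the perturbed mean first passage times
  intro Tt hTt i j
  have hQt : ∀ k, (tabooM Pt j *ᵥ fun m => Tt m j) k = Tt k j - 1 := by
    intro k
    have heq := hTt.2 k j
    have h : (tabooM Pt j *ᵥ fun m => Tt m j) k
        = ∑ l ∈ Finset.univ.filter (fun l => l ≠ j), Pt k l * Tt l j := by
      simp only [Matrix.mulVec, dotProduct, tabooM, Matrix.of_apply,
        Finset.sum_filter]
      apply Finset.sum_congr rfl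
      intro l _
      by_cases hl : l = j <;> simp [hl]
    rw [h]
    linarith
  have hdle : ∀ k, (fun m => Tt m j - 2 * T m j) k
      ≤ (tabooM Pt j *ᵥ fun m => Tt m j - 2 * T m j) k := by
    intro k
    have hsplit : (tabooM Pt j *ᵥ fun m => Tt m j - 2 * T m j) k
        = (tabooM Pt j *ᵥ fun m => Tt m j) k - (tabooM Pt j *ᵥ fun m => 2 * T m j) k := by
      simp only [Matrix.mulVec, dotProduct]
      rw [← Finset.sum_sub_distrib]
      apply Finset.sum_congr rfl
      intro l _
      ring
    rw [hsplit, hQt k]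
    have := hQs j k
    simp only
    linarith
  have hdpow := myLe_pow_mulVec (hQ0 j) hdle
  have hNe : Nonempty (Fin S) := ⟨⟨0, hS⟩⟩
  have hne : (Finset.univ : Finset (Fin S)).Nonempty := Finset.univ_nonempty
  set C : ℝ := (Finset.univ.sup' hne (fun m => Tt m j - 2 * T m j)) ⊔ 0 with hC
  have hC0 : 0 ≤ C := le_max_right _ _
  have hdC : ∀ k, Tt k j - 2 * T k j ≤ C := fun k =>
    (Finset.le_sup' (fun m => Tt m j - 2 * T m j) (Finset.mem_univ k)).trans (le_max_left _ _)
  have hds : ∀ k, (fun m => Tt m j - 2 * T m j) k ≤ (fun m => (C / 2) * (2 * T m j)) k := by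
    intro k
    simp only
    have h1 := hT1 k j
    nlinarith [hdC k, mul_nonneg hC0 (by linarith : (0:ℝ) ≤ T k j - 1)]
  have key : ∀ n, Tt i j - 2 * T i j ≤ C * D * (1 - 1 / (2 * D)) ^ n := by
    intro n
    have h1 := hdpow n i
    have h2 : ((tabooM Pt j ^ n) *ᵥ fun m => Tt m j - 2 * T m j) i
        ≤ ((tabooM Pt j ^ n) *ᵥ fun m => (C / 2) * (2 * T m j)) i :=
      myMulVec_mono (myPow_nonneg (hQ0 j) n) hds i
    have h3 : ((tabooM Pt j ^ n) *ᵥ fun m => (C / 2) * (2 * T m j)) i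
        = (C / 2) * (((tabooM Pt j ^ n) *ᵥ fun m => 2 * T m j) i) := by
      simp only [Matrix.mulVec, dotProduct, Finset.mul_sum]
      apply Finset.sum_congr rfl
      intro l _
      ring
    have h4 := hpow j n i
    have h5 : (C / 2) * (((tabooM Pt j ^ n) *ᵥ fun m => 2 * T m j) i)
        ≤ (C / 2) * ((1 - 1 / (2 * D)) ^ n * (2 * D)) := by
      apply mul_le_mul_of_nonneg_left _ (by linarith)
      have hTij := hTD i j
      have hp := pow_nonneg hθ0 n
      nlinarith [h4]
    calc Tt i j - 2 * T i j ≤ _ := h1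
      _ ≤ _ := h2
      _ = _ := h3
      _ ≤ (C / 2) * ((1 - 1 / (2 * D)) ^ n * (2 * D)) := h5
      _ = C * D * (1 - 1 / (2 * D)) ^ n := by ring
  have htend : Filter.Tendsto (fun n => C * D * (1 - 1 / (2 * D)) ^ n)
      Filter.atTop (nhds 0) := by
    have h := tendsto_pow_atTop_nhds_zero_of_lt_one hθ0 hθ1
    simpa using h.const_mul (C * D)
  have hdi0 : Tt i j - 2 * T i j ≤ 0 := ge_of_tendsto' htend key
  have := hTD i j
  linarith
end

section
/- Let P be a row-stochastic S×S real matrix and fix an index n; without loss of generality take n to be the last index. Let P_n be the (S−1)×(S−1) matrix obtained from P by deleting its n-th row and n-th column, let p_nᵀ be the n-th row of P, and e_n the n-th standard basis column vector. If I − P_n is invertible, then I − P + e_n p_nᵀ is invertible and its inverse is the block matrix [[(I − P_n)^{-1}, 𝟙], [0, 1]], where 𝟙 is the all-ones column vector of length S−1. -/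
/-- The rank-one matrix `e_n p_nᵀ`, whose `n`-th row is the `n`-th row of `P`
and whose other rows vanish. -/
def rankOneRow {S : ℕ} (P : Matrix (Fin S) (Fin S) ℝ) (n : Fin S) :
    Matrix (Fin S) (Fin S) ℝ :=
  Matrix.of fun i j => if i = n then P n j else 0

/-- The principal submatrix of `P` obtained by deleting the last row and column. -/
def delLast {m : ℕ} (P : Matrix (Fin (m + 1)) (Fin (m + 1)) ℝ) :
    Matrix (Fin m) (Fin m) ℝ :=
  P.submatrix Fin.castSucc Fin.castSucc

/-!
In the block decomposition `{1, …, S−1} ⊔ {S}`, the last row of `I − P + e_n p_nᵀ` is `e_nᵀ`,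
so the matrix is `[[I − P_n, −q], [0, 1]]` with `q` the last column of `P` without its last entry.
Because the rows of `P` sum to one, `(I − P_n) 𝟙 = q`, which makes `[[(I − P_n)⁻¹, 𝟙], [0, 1]]`
a right inverse; for square matrices that is a two-sided inverse.
-/

open Matrix

theorem fromBlocks_mul_fromBlocks_inv_eq_one {l n α : Type*} [Fintype l] [Fintype n]
    [DecidableEq l] [DecidableEq n] [CommRing α] {A : Matrix l l α} (hA : IsUnit A)
    {B C : Matrix l n α} (h : A * C + B = 0) :
    fromBlocks A B (0 : Matrix n l α) 1 * fromBlocks A⁻¹ C 0 1 = 1 := by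
  rw [fromBlocks_multiply, mul_nonsing_inv A ((isUnit_iff_isUnit_det A).1 hA)]
  simp [h, fromBlocks_one]

theorem one_sub_delLast_mul_const_one {m : ℕ} {P : Matrix (Fin (m + 1)) (Fin (m + 1)) ℝ}
    (hP : ∀ i, ∑ j, P i j = 1) {ι : Type*} :
    (1 - delLast P) * (of fun _ _ => 1 : Matrix (Fin m) ι ℝ) =
      of fun i _ => P i.castSucc (Fin.last m) := by
  ext i k
  have hrow := hP i.castSucc
  rw [Fin.sum_univ_castSucc] at hrow
  simp [mul_apply, one_apply, delLast]
  linarith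

theorem one_sub_add_rankOneRow_last_eq_reindex_fromBlocks {m : ℕ}
    (P : Matrix (Fin (m + 1)) (Fin (m + 1)) ℝ) :
    1 - P + rankOneRow P (Fin.last m) =
      reindex finSumFinEquiv finSumFinEquiv
        (fromBlocks (1 - delLast P) (of fun i _ => -P i.castSucc (Fin.last m)) 0
          (1 : Matrix (Fin 1) (Fin 1) ℝ)) := by
  ext i j
  induction i using Fin.lastCases <;> induction j using Fin.lastCases <;>
    simp [rankOneRow, delLast, one_apply, (Fin.castSucc_lt_last _).ne,
      (Fin.castSucc_lt_last _).ne']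

/-- Explicit block form of the inverse of `I − P + e_n p_nᵀ` for `n` the last index:
if `I − P_n` is invertible (where `P_n` deletes the `n`-th row and column), then
`I − P + e_n p_nᵀ` is invertible with inverse the block matrix
`[[(I − P_n)⁻¹, 𝟙], [0, 1]]`. -/
theorem g_inverse_block_form
    {m : ℕ}
    (P : Matrix (Fin (m + 1)) (Fin (m + 1)) ℝ)
    (hP : RowStochastic P)
    (hInv : IsUnit (1 - delLast P)) :
    (1 - P + rankOneRow P (Fin.last m)) *
        (Matrix.reindex finSumFinEquiv finSumFinEquiv
          (Matrix.fromBlocks (1 - delLast P)⁻¹ (Matrix.of fun _ _ => (1 : ℝ)) 0 1)) = 1 ∧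
      (Matrix.reindex finSumFinEquiv finSumFinEquiv
          (Matrix.fromBlocks (1 - delLast P)⁻¹ (Matrix.of fun _ _ => (1 : ℝ)) 0 1)) *
        (1 - P + rankOneRow P (Fin.last m)) = 1 := by
  have hblock := fromBlocks_mul_fromBlocks_inv_eq_one hInv (n := Fin 1)
    (B := of fun i _ => -P i.castSucc (Fin.last m)) (C := of fun _ _ => 1)
    (by rw [one_sub_delLast_mul_const_one hP.2]; ext; simp)
  have hright : (1 - P + rankOneRow P (Fin.last m)) *
      reindex finSumFinEquiv finSumFinEquiv
        (fromBlocks (1 - delLast P)⁻¹ (of fun _ _ => (1 : ℝ)) 0 1) = 1 := by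
    rw [one_sub_add_rankOneRow_last_eq_reindex_fromBlocks, reindex_apply, reindex_apply,
      submatrix_mul_equiv, hblock, submatrix_one_equiv]
  exact ⟨hright, mul_eq_one_comm.mp hright⟩
end

section
/- Let 𝒮 be a finite set of states and s_1, …, s_T (T ≥ 1) a finite sequence in 𝒮 that visits every state at least once. For s ∈ 𝒮 let v(s) = #{t ∈ {1, …, T} : s_t = s}, and define the 'cyclic empirical' transition matrix p̃(s′|s) = ( #{t ∈ {1, …, T−1} : s_t = s and s_{t+1} = s′} + 1{s_T = s and s_1 = s′} ) / v(s). Then p̃ is a row-stochastic matrix, it is irreducible, and the empirical frequency vector μ(s) = v(s)/T is its stationary distribution, i.e., Σ_s μ(s) p̃(s′|s) = μ(s′) for every s′. -/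
/-- The cyclic empirical transition matrix of a trajectory `seq 0, seq 1, …, seq (T-1)`:
`p̃(b|a) = (#{t < T-1 : seq t = a, seq (t+1) = b} + 1{seq (T-1) = a, seq 0 = b}) / v(a)`,
where `v(a)` is the number of visits to `a`. -/
noncomputable def cyclicEmpirical {𝒮 : Type*} [Fintype 𝒮] [DecidableEq 𝒮]
    (T : ℕ) (seq : ℕ → 𝒮) : Matrix 𝒮 𝒮 ℝ :=
  Matrix.of fun a b =>
    ((((Finset.range (T - 1)).filter fun t => seq t = a ∧ seq (t + 1) = b).card : ℝ) +
        (if seq (T - 1) = a ∧ seq 0 = b then 1 else 0)) /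
      (((Finset.range T).filter fun t => seq t = a).card : ℝ)

/-!
Close the trajectory into the cycle `seq 0 → seq 1 → ⋯ → seq (T-1) → seq 0` and let `N a b` count
its `a → b` steps, so that `p̃(b|a) = N a b / v a`. Every visit to `a` is the start of exactly one
step and the end of exactly one step, hence both the row and the column sums of `N` at `a` equal
`v a`. So the rows of `p̃` sum to `1`, and `∑ₐ μ(a) p̃(b|a) = ∑ₐ N a b / T = v b / T = μ(b)`.
Every step of the cycle has positive probability and the cycle passes through every state, so
`p̃` is irreducible.
-/

open Finset Function

theorem Function.Periodic.card_filter_range_add_one {p : ℕ → Prop} [DecidablePred p] {T : ℕ}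
    (hp : Periodic p T) : #{t ∈ range T | p (t + 1)} = #{t ∈ range T | p t} := by
  have h := Nat.count_add' p T 1
  rw [Nat.count_succ, Nat.count_one] at h
  simp only [hp.eq] at h
  rw [← Nat.count_eq_card_filter_range, ← Nat.count_eq_card_filter_range]
  omega

namespace Matrix

variable {n R : Type*} [Fintype n] [DecidableEq n] [Semiring R] [PartialOrder R]
  [IsStrictOrderedRing R]

theorem pow_apply_pos_of_chain {A : Matrix n n R} (hA : ∀ i j, 0 ≤ A i j) {f : ℕ → n}
    (hf : ∀ t, 0 < A (f t) (f (t + 1))) (k t : ℕ) : 0 < (A ^ k) (f t) (f (t + k)) := by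
  induction k with
  | zero => simp
  | succ k ih =>
    rw [pow_succ, mul_apply, ← add_assoc]
    exact sum_pos' (fun l _ ↦ mul_nonneg (pow_apply_nonneg hA k _ l) (hA l _))
      ⟨f (t + k), mem_univ _, mul_pos ih (hf _)⟩

end Matrix

section CyclicEmpirical

variable {𝒮 : Type*} [DecidableEq 𝒮] (T : ℕ) (seq : ℕ → 𝒮)

def visitCount (a : 𝒮) : ℕ := #{t ∈ range T | seq t = a}

/-- Transitions of the closed walk `seq 0, …, seq (T-1), seq 0`. -/
def cyclicTransitionCount (a b : 𝒮) : ℕ := #{t ∈ range T | seq t = a ∧ seq ((t + 1) % T) = b}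

variable {T seq}

theorem cyclicTransitionCount_eq (hT : 1 ≤ T) (a b : 𝒮) :
    cyclicTransitionCount T seq a b =
      #{t ∈ range (T - 1) | seq t = a ∧ seq (t + 1) = b} +
        if seq (T - 1) = a ∧ seq 0 = b then 1 else 0 := by
  obtain ⟨m, rfl⟩ : ∃ m, T = m + 1 := ⟨T - 1, by omega⟩
  have hwrap : (m + 1) % (m + 1) = 0 := Nat.mod_self _
  have hinner : ∀ t ∈ range m, (t + 1) % (m + 1) = t + 1 := fun t ht ↦
    Nat.mod_eq_of_lt (by simpa using ht)
  rw [cyclicTransitionCount, range_add_one, filter_insert, Nat.add_sub_cancel, hwrap,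
    filter_congr fun t ht ↦ by rw [hinner t ht]]
  split_ifs <;> simp [card_insert_of_notMem, *]

theorem cyclicEmpirical_apply [Fintype 𝒮] (hT : 1 ≤ T) (a b : 𝒮) :
    cyclicEmpirical T seq a b = cyclicTransitionCount T seq a b / visitCount T seq a := by
  rw [cyclicTransitionCount_eq hT]
  push_cast
  rfl

theorem sum_cyclicTransitionCount_right [Fintype 𝒮] (a : 𝒮) :
    ∑ b, cyclicTransitionCount T seq a b = visitCount T seq a := by
  rw [visitCount, card_eq_sum_card_fiberwise (f := fun t ↦ seq ((t + 1) % T)) (t := univ)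
    (fun _ _ ↦ mem_coe.2 (mem_univ _))]
  simp only [filter_filter, cyclicTransitionCount]

theorem sum_cyclicTransitionCount_left [Fintype 𝒮] (b : 𝒮) :
    ∑ a, cyclicTransitionCount T seq a b = visitCount T seq b := by
  have hshift := ((Nat.periodic_mod T).comp (fun t ↦ seq t = b)).card_filter_range_add_one
  simp only [comp_apply] at hshift
  have hmod : #{t ∈ range T | seq (t % T) = b} = visitCount T seq b :=
    congrArg card <| filter_congr fun t ht ↦ by rw [Nat.mod_eq_of_lt (mem_range.1 ht)]
  rw [← hmod, ← hshift, card_eq_sum_card_fiberwise (f := seq) (t := univ)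
    (fun _ _ ↦ mem_coe.2 (mem_univ _))]
  simp only [filter_filter, cyclicTransitionCount, and_comm]

theorem visitCount_pos {a : 𝒮} : 0 < visitCount T seq a ↔ ∃ t < T, seq t = a := by
  simp [visitCount, card_pos, filter_nonempty_iff]

variable [Fintype 𝒮]

theorem cyclicEmpirical_nonneg (a b : 𝒮) : 0 ≤ cyclicEmpirical T seq a b := by
  rw [cyclicEmpirical, Matrix.of_apply]
  positivity

theorem sum_cyclicEmpirical_right (hT : 1 ≤ T) {a : 𝒮} (ha : 0 < visitCount T seq a) :
    ∑ b, cyclicEmpirical T seq a b = 1 := by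
  simp_rw [cyclicEmpirical_apply hT, ← sum_div, ← Nat.cast_sum, sum_cyclicTransitionCount_right]
  exact div_self (by exact_mod_cast ha.ne')

theorem sum_visitCount_div_mul_cyclicEmpirical (hT : 1 ≤ T) (hv : ∀ a, 0 < visitCount T seq a)
    (b : 𝒮) :
    ∑ a, (visitCount T seq a : ℝ) / T * cyclicEmpirical T seq a b = visitCount T seq b / T :=
  calc ∑ a, (visitCount T seq a : ℝ) / T * cyclicEmpirical T seq a b
      = ∑ a, (cyclicTransitionCount T seq a b : ℝ) / T := sum_congr rfl fun a _ ↦ by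
        have := (hv a).ne'
        rw [cyclicEmpirical_apply hT]
        field_simp
    _ = visitCount T seq b / T := by
        rw [← sum_div, ← Nat.cast_sum, sum_cyclicTransitionCount_left]

theorem cyclicEmpirical_apply_seq_mod_pos (hT : 1 ≤ T) (t : ℕ) :
    0 < cyclicEmpirical T seq (seq (t % T)) (seq ((t + 1) % T)) := by
  have hstep : t % T ∈
      {s ∈ range T | seq s = seq (t % T) ∧ seq ((s + 1) % T) = seq ((t + 1) % T)} :=
    mem_filter.2 ⟨mem_range.2 (Nat.mod_lt _ hT), rfl, by rw [Nat.mod_add_mod]⟩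
  rw [cyclicEmpirical_apply hT]
  exact div_pos (by exact_mod_cast card_pos.2 ⟨_, hstep⟩)
    (by exact_mod_cast visitCount_pos.2 ⟨t % T, Nat.mod_lt _ hT, rfl⟩)

theorem exists_pow_cyclicEmpirical_apply_pos (hT : 1 ≤ T) (hvisit : ∀ s, ∃ t < T, seq t = s)
    (a b : 𝒮) : ∃ n, 1 ≤ n ∧ 0 < (cyclicEmpirical T seq ^ n) a b := by
  obtain ⟨ta, hta, rfl⟩ := hvisit a
  obtain ⟨tb, htb, rfl⟩ := hvisit b
  have hwalk := Matrix.pow_apply_pos_of_chain (A := cyclicEmpirical T seq) cyclicEmpirical_nonneg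
    (f := fun t ↦ seq (t % T)) (cyclicEmpirical_apply_seq_mod_pos hT) (tb + T - ta) ta
  refine ⟨tb + T - ta, by omega, ?_⟩
  rwa [show ta + (tb + T - ta) = tb + T by omega, Nat.add_mod_right, Nat.mod_eq_of_lt hta,
    Nat.mod_eq_of_lt htb] at hwalk

end CyclicEmpirical

theorem cyclicEmpirical_stationary_general
    {𝒮 : Type*} [Fintype 𝒮] [DecidableEq 𝒮]
    (T : ℕ) (hT : 1 ≤ T)
    (seq : ℕ → 𝒮)
    (hvisit : ∀ s : 𝒮, ∃ t < T, seq t = s) :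
    (∀ a b, 0 ≤ cyclicEmpirical T seq a b) ∧
      (∀ a, ∑ b, cyclicEmpirical T seq a b = 1) ∧
      (∀ a b, ∃ n : ℕ, 1 ≤ n ∧ 0 < (cyclicEmpirical T seq ^ n) a b) ∧
      (∀ b : 𝒮,
        ∑ a, (((Finset.range T).filter fun t => seq t = a).card : ℝ) / T *
            cyclicEmpirical T seq a b =
          (((Finset.range T).filter fun t => seq t = b).card : ℝ) / T) := by
  have hv : ∀ a, 0 < visitCount T seq a := fun a ↦ visitCount_pos.2 (hvisit a)
  exact ⟨cyclicEmpirical_nonneg, fun a ↦ sum_cyclicEmpirical_right hT (hv a),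
    exists_pow_cyclicEmpirical_apply_pos hT hvisit, sum_visitCount_div_mul_cyclicEmpirical hT hv⟩

/-- The cyclic empirical transition matrix of a trajectory visiting every state is a
row-stochastic irreducible matrix whose stationary distribution is the empirical
frequency vector `μ(s) = v(s)/T`. -/
theorem cyclicEmpirical_stationary
    {𝒮 : Type*} [Fintype 𝒮] [DecidableEq 𝒮] [Nonempty 𝒮]
    (T : ℕ) (hT : 1 ≤ T)
    (seq : ℕ → 𝒮)
    (hvisit : ∀ s : 𝒮, ∃ t < T, seq t = s) :
    (∀ a b, 0 ≤ cyclicEmpirical T seq a b) ∧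
      (∀ a, ∑ b, cyclicEmpirical T seq a b = 1) ∧
      (∀ a b, ∃ n : ℕ, 1 ≤ n ∧ 0 < (cyclicEmpirical T seq ^ n) a b) ∧
      (∀ b : 𝒮,
        ∑ a, (((Finset.range T).filter fun t => seq t = a).card : ℝ) / T *
            cyclicEmpirical T seq a b =
          (((Finset.range T).filter fun t => seq t = b).card : ℝ) / T) :=
  cyclicEmpirical_stationary_general T hT seq hvisit
end

section
/- Let z_1, …, z_N be real numbers with 0 ≤ z_i ≤ Z_{i−1} for every i, where Z_{i−1} := max{1, Σ_{ℓ=1}^{i−1} z_ℓ}. Then for any subset K ⊆ {1, …, N}, Σ_{i∈K} z_i / √(Z_{i−1}) ≤ (√2 + 1) · √(Σ_{i∈K} z_i). -/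
/-!
Let `S` be the part of `∑_{j ∈ K} z_j` coming before `i`. Both `S` and `z_i` are at most `Z_{i-1}`,
so `√(S + z_i) + √S ≤ (√2 + 1) √Z_{i-1}`, and multiplying by `√(S + z_i) - √S` gives
`z_i / √Z_{i-1} ≤ (√2 + 1) (√(S + z_i) - √S)`. Summing over `i ∈ K`, the right-hand side telescopes.
-/

open Real

lemma div_sqrt_le_mul_sqrt_add_sub_sqrt {t v d : ℝ} (ht : 0 ≤ t) (hv : 0 ≤ v) (htd : t ≤ d)
    (hvd : v ≤ d) : v / √d ≤ (√2 + 1) * (√(t + v) - √t) := by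
  have hsum : √(t + v) + √t ≤ (√2 + 1) * √d := by
    have h₁ : √(t + v) ≤ √2 * √d := by
      rw [← sqrt_mul zero_le_two]
      exact sqrt_le_sqrt (by linarith)
    have h₂ : √t ≤ √d := sqrt_le_sqrt htd
    linarith
  have hdiff : 0 ≤ √(t + v) - √t := sub_nonneg.2 (sqrt_le_sqrt (by linarith))
  have hv_eq : v = (√(t + v) - √t) * (√(t + v) + √t) := by
    rw [mul_comm, ← sq_sub_sq, sq_sqrt (add_nonneg ht hv), sq_sqrt ht]
    ring
  refine div_le_of_le_mul₀ (sqrt_nonneg d) (mul_nonneg (by positivity) hdiff) ?_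
  calc v = (√(t + v) - √t) * (√(t + v) + √t) := hv_eq
    _ ≤ (√(t + v) - √t) * ((√2 + 1) * √d) := mul_le_mul_of_nonneg_left hsum hdiff
    _ = (√2 + 1) * (√(t + v) - √t) * √d := by ring

theorem sum_div_sqrt_le_of_sum_lt_le {ι : Type*} [LinearOrder ι] (K : Finset ι) (z d : ι → ℝ)
    (hz : ∀ i ∈ K, 0 ≤ z i) (hzd : ∀ i ∈ K, z i ≤ d i)
    (hd : ∀ i ∈ K, ∑ j ∈ K with j < i, z j ≤ d i) :
    ∑ i ∈ K, z i / √(d i) ≤ (√2 + 1) * √(∑ i ∈ K, z i) := by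
  induction K using Finset.induction_on_max with
  | empty => simp
  | insert a s ha ih =>
    have has : a ∉ s := fun h => lt_irrefl a (ha a h)
    have hz' : ∀ i ∈ s, 0 ≤ z i := fun i hi => hz i (Finset.mem_insert_of_mem hi)
    have hd' : ∀ i ∈ s, ∑ j ∈ s with j < i, z j ≤ d i := fun i hi =>
      (Finset.sum_le_sum_of_subset_of_nonneg
          (Finset.filter_subset_filter _ (Finset.subset_insert a s))
          fun j hj _ => hz j (Finset.mem_filter.1 hj).1).trans
        (hd i (Finset.mem_insert_of_mem hi))
    have hbefore : ∑ j ∈ insert a s with j < a, z j = ∑ j ∈ s, z j := by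
      rw [Finset.filter_insert, if_neg (lt_irrefl a), Finset.filter_true_of_mem ha]
    have hstep := div_sqrt_le_mul_sqrt_add_sub_sqrt (Finset.sum_nonneg hz')
      (hz a (Finset.mem_insert_self a s)) (hbefore ▸ hd a (Finset.mem_insert_self a s))
      (hzd a (Finset.mem_insert_self a s))
    have ih' := ih hz' (fun i hi => hzd i (Finset.mem_insert_of_mem hi)) hd'
    rw [Finset.sum_insert has, Finset.sum_insert has, add_comm (z a)]
    linarith

/-- For a sequence `z_1, …, z_N` (here `z 0, …, z (N-1)`) with
`0 ≤ z_i ≤ Z_{i-1} := max{1, z_1 + ⋯ + z_{i-1}}`, and any subset `K` of the indices,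
`∑_{i ∈ K} z_i / √(Z_{i-1}) ≤ (√2 + 1) √(∑_{i ∈ K} z_i)`. -/
theorem sum_div_sqrt_partial_sums_le
    (N : ℕ) (z : ℕ → ℝ)
    (hz : ∀ i < N, 0 ≤ z i ∧ z i ≤ max 1 (∑ ℓ ∈ Finset.range i, z ℓ))
    (K : Finset ℕ) (hK : K ⊆ Finset.range N) :
    ∑ i ∈ K, z i / Real.sqrt (max 1 (∑ ℓ ∈ Finset.range i, z ℓ)) ≤
      (Real.sqrt 2 + 1) * Real.sqrt (∑ i ∈ K, z i) := by
  have hN : ∀ i ∈ K, i < N := fun i hi => Finset.mem_range.1 (hK hi)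
  refine sum_div_sqrt_le_of_sum_lt_le K z _ (fun i hi => (hz i (hN i hi)).1)
    (fun i hi => (hz i (hN i hi)).2) fun i hi => le_max_of_le_right ?_
  refine Finset.sum_le_sum_of_subset_of_nonneg (fun j hj => ?_) fun j hj _ => ?_
  · exact Finset.mem_range.2 (Finset.mem_filter.1 hj).2
  · exact (hz j ((Finset.mem_range.1 hj).trans (hN i hi))).1
end

section
/- Let 𝒮 be a finite nonempty state set and 𝒜 a finite nonempty action set. For each a ∈ 𝒜 let P_a be a row-stochastic matrix on 𝒮 and r_a : 𝒮 → ℝ a reward vector. Let v : 𝒮 → ℝ be a vector with span(v) := max_s v(s) − min_s v(s) ≤ D, and let c ∈ ℝ satisfy min_{a∈𝒜} { r_a(s) + Σ_{s′} P_a(s′|s) v(s′) } − v(s) ≥ c for every s ∈ 𝒮. Define u_0 ≡ 0 and u_{i+1}(s) = min_{a∈𝒜} { r_a(s) + Σ_{s′} P_a(s′|s) u_i(s′) } for i ≥ 0. Then for every i ≥ 0 and every s ∈ 𝒮, u_i(s) ≥ i·c + v(s) − max_{s′} v(s′); in particular u_i(s) ≥ i·c − D. -/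
/-!
The minimizing Bellman operator `T w s = min_a (r_a(s) + (P_a w)(s))` is monotone and commutes
with adding constants, because each `P_a` is stochastic. The hypothesis on `v` says
`T v ≥ c + v`, so by induction `u_i ≥ i c + v - max v`: if this holds for `u_i`, then
`u_{i+1} = T u_i ≥ T (i c - max v + v) = i c - max v + T v ≥ (i + 1) c + v - max v`.
-/

open Finset

noncomputable def bellmanMin {𝒮 𝒜 : Type*} [Fintype 𝒮]
    (P : 𝒜 → 𝒮 → 𝒮 → ℝ) (r : 𝒜 → 𝒮 → ℝ) (w : 𝒮 → ℝ) (s : 𝒮) : ℝ :=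
  ⨅ a, (r a s + ∑ s', P a s s' * w s')

lemma add_sum_mul_le_sum_mul {ι : Type*} [Fintype ι] {p w w' : ι → ℝ} {k : ℝ}
    (hp : ∀ i, 0 ≤ p i) (hp1 : ∑ i, p i = 1) (hw : ∀ i, k + w i ≤ w' i) :
    k + ∑ i, p i * w i ≤ ∑ i, p i * w' i :=
  calc k + ∑ i, p i * w i = ∑ i, p i * (k + w i) := by
        simp only [mul_add, sum_add_distrib, ← sum_mul, hp1, one_mul]
    _ ≤ ∑ i, p i * w' i := sum_le_sum fun i _ => mul_le_mul_of_nonneg_left (hw i) (hp i)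

lemma add_bellmanMin_le {𝒮 𝒜 : Type*} [Fintype 𝒮] [Finite 𝒜] [Nonempty 𝒜]
    {P : 𝒜 → 𝒮 → 𝒮 → ℝ} (hP : ∀ a s s', 0 ≤ P a s s') (hP1 : ∀ a s, ∑ s', P a s s' = 1)
    (r : 𝒜 → 𝒮 → ℝ) {w w' : 𝒮 → ℝ} {k : ℝ} (hw : ∀ s, k + w s ≤ w' s) (s : 𝒮) :
    k + bellmanMin P r w s ≤ bellmanMin P r w' s := by
  refine le_ciInf fun a => ?_
  have hinf : bellmanMin P r w s ≤ r a s + ∑ s', P a s s' * w s' :=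
    ciInf_le (Finite.bddBelow_range _) a
  linarith [add_sum_mul_le_sum_mul (hP a s) (hP1 a s) hw]

theorem dp_iterates_lower_bound_general
    {𝒮 𝒜 : Type*} [Fintype 𝒮] [Fintype 𝒜] [Nonempty 𝒜]
    (P : 𝒜 → 𝒮 → 𝒮 → ℝ)
    (hP : ∀ a, (∀ s s', 0 ≤ P a s s') ∧ ∀ s, ∑ s', P a s s' = 1)
    (r : 𝒜 → 𝒮 → ℝ)
    (v : 𝒮 → ℝ) (D : ℝ)
    (hspan : (⨆ s, v s) - (⨅ s, v s) ≤ D)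
    (c : ℝ)
    (hc : ∀ s, (⨅ a, (r a s + ∑ s', P a s s' * v s')) - v s ≥ c)
    (u : ℕ → 𝒮 → ℝ)
    (hu0 : ∀ s, u 0 s = 0)
    (hu : ∀ i s, u (i + 1) s = ⨅ a, (r a s + ∑ s', P a s s' * u i s')) :
    ∀ (i : ℕ) (s : 𝒮),
      u i s ≥ i * c + v s - (⨆ s', v s') ∧ u i s ≥ i * c - D := by
  have hmax : ∀ s, v s ≤ ⨆ s', v s' := le_ciSup (Finite.bddAbove_range v)
  have hmin : ∀ s, (⨅ s', v s') ≤ v s := ciInf_le (Finite.bddBelow_range v)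
  have hlower : ∀ (i : ℕ) (s : 𝒮), u i s ≥ i * c + v s - (⨆ s', v s') := by
    intro i
    induction i with
    | zero => intro s; simp only [hu0, Nat.cast_zero, zero_mul, zero_add]; linarith [hmax s]
    | succ i ih =>
      intro s
      have hstep : (i * c - ⨆ s', v s') + bellmanMin P r v s ≤ bellmanMin P r (u i) s :=
        add_bellmanMin_le (fun a => (hP a).1) (fun a => (hP a).2) r
          (fun s' => by linarith [ih s']) s
      rw [hu]
      unfold bellmanMin at hstep
      push_cast
      linarith [hc s]
  exact fun i s => ⟨hlower i s, by linarith [hlower i s, hmin s]⟩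

/-- Lower bound for the finite-horizon minimizing dynamic-programming iterates:
if `span(v) ≤ D` and `min_a { r_a(s) + (P_a v)(s) } − v(s) ≥ c` for every `s`, then the
iterates `u_0 ≡ 0`, `u_{i+1}(s) = min_a { r_a(s) + (P_a u_i)(s) }` satisfy
`u_i(s) ≥ i·c + v(s) − max v` and in particular `u_i(s) ≥ i·c − D`. -/
theorem dp_iterates_lower_bound
    {𝒮 𝒜 : Type*} [Fintype 𝒮] [Nonempty 𝒮] [Fintype 𝒜] [Nonempty 𝒜]
    (P : 𝒜 → 𝒮 → 𝒮 → ℝ)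
    (hP : ∀ a, (∀ s s', 0 ≤ P a s s') ∧ ∀ s, ∑ s', P a s s' = 1)
    (r : 𝒜 → 𝒮 → ℝ)
    (v : 𝒮 → ℝ) (D : ℝ) (hD : 0 ≤ D)
    (hspan : (⨆ s, v s) - (⨅ s, v s) ≤ D)
    (c : ℝ)
    (hc : ∀ s, (⨅ a, (r a s + ∑ s', P a s s' * v s')) - v s ≥ c)
    (u : ℕ → 𝒮 → ℝ)
    (hu0 : ∀ s, u 0 s = 0)
    (hu : ∀ i s, u (i + 1) s = ⨅ a, (r a s + ∑ s', P a s s' * u i s')) :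
    ∀ (i : ℕ) (s : 𝒮),
      u i s ≥ i * c + v s - (⨆ s', v s') ∧ u i s ≥ i * c - D :=
  dp_iterates_lower_bound_general P hP r v D hspan c hc u hu0 hu
end
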